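/- Let (a_j)_{j≥1} and (b_j)_{j≥1} be two nondecreasing sequences of positive real numbers tending to infinity, with Riesz means R_a(Λ) := Σ_{j≥1} (Λ − a_j)_+ and R_b(Λ) := Σ_{j≥1} (Λ − b_j)_+. If R_a(Λ) ≤ R_b(Λ) for every Λ > 0, then for every integer k ≥ 1 the Cesàro averages satisfy (1/k) Σ_{j=1}^k a_j ≥ (1/k) Σ_{j=1}^k b_j. -/

import Mathlib

open scoped BigOperators

open Filter Finset

/-- The (order-1) Riesz mean of a sequence `λ_j = f j` (indices `j ≥ 1`):
`R(Λ) = Σ_{j≥1} (Λ − λ_j)_+`. -/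
noncomputable def RieszMean (f : ℕ → ℝ) (Λ : ℝ) : ℝ :=
  ∑' j : ℕ, max (Λ - f (j + 1)) 0

/-- The Cesàro average `A(k) = (1/k) Σ_{j=1}^k λ_j`. -/
noncomputable def CesaroAvg (f : ℕ → ℝ) (k : ℕ) : ℝ :=
  (∑ j ∈ Finset.Icc 1 k, f j) / k

/-- The counting function `N(τ) = #{ j ≥ 1 : λ_j < τ }`. -/
noncomputable def Counting (f : ℕ → ℝ) (τ : ℝ) : ℕ :=
  Nat.card {j : ℕ // 1 ≤ j ∧ f j < τ}

/-! Test the Riesz inequality at `Λ = b_{k+1}`: there `R_b(Λ) = kΛ − Σ_{j ≤ k} b_j`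
exactly, while `R_a(Λ) ≥ kΛ − Σ_{j ≤ k} a_j` for every `Λ`. This is one instance of
`A(k) = sup_Λ (Λ − R(Λ)/k)`, with the supremum attained at `Λ = λ_{k+1}`. -/

open Filter Finset

lemma sum_Icc_one_eq_sum_range (f : ℕ → ℝ) (k : ℕ) :
    ∑ j ∈ Icc 1 k, f j = ∑ j ∈ range k, f (j + 1) := by
  rw [← Ico_add_one_right_eq_Icc, sum_Ico_eq_sum_range]
  simp [add_comm]

lemma mul_sub_sum_Icc_eq_sum_range (f : ℕ → ℝ) (k : ℕ) (Λ : ℝ) :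
    k * Λ - ∑ j ∈ Icc 1 k, f j = ∑ j ∈ range k, (Λ - f (j + 1)) := by
  rw [sum_sub_distrib, sum_const, card_range, nsmul_eq_mul, sum_Icc_one_eq_sum_range]

lemma summable_rieszMean_terms {f : ℕ → ℝ} (hf : Tendsto f atTop atTop) (Λ : ℝ) :
    Summable fun j ↦ max (Λ - f (j + 1)) 0 := by
  obtain ⟨N, hN⟩ := (hf.eventually_ge_atTop Λ).exists_forall_of_atTop
  refine summable_of_ne_finset_zero (s := range N) fun j hj ↦ ?_
  have : Λ ≤ f (j + 1) := hN _ (by simp at hj; omega)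
  simp [this]

lemma mul_sub_sum_le_rieszMean {f : ℕ → ℝ} (hf : Tendsto f atTop atTop) (k : ℕ) (Λ : ℝ) :
    k * Λ - ∑ j ∈ Icc 1 k, f j ≤ RieszMean f Λ := by
  rw [mul_sub_sum_Icc_eq_sum_range]
  calc ∑ j ∈ range k, (Λ - f (j + 1))
      ≤ ∑ j ∈ range k, max (Λ - f (j + 1)) 0 := sum_le_sum fun _ _ ↦ le_max_left _ _
    _ ≤ RieszMean f Λ :=
      (summable_rieszMean_terms hf Λ).sum_le_tsum _ fun _ _ ↦ le_max_right _ _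

lemma rieszMean_eq_mul_sub_sum {f : ℕ → ℝ} {k : ℕ} {Λ : ℝ}
    (hle : ∀ j ∈ Icc 1 k, f j ≤ Λ) (hge : ∀ j, k < j → Λ ≤ f j) :
    RieszMean f Λ = k * Λ - ∑ j ∈ Icc 1 k, f j := by
  rw [mul_sub_sum_Icc_eq_sum_range, RieszMean, tsum_eq_sum (s := range k)]
  · refine sum_congr rfl fun j hj ↦ max_eq_left (sub_nonneg.2 (hle _ ?_))
    simp at hj ⊢
    omega
  · intro j hj
    have : Λ ≤ f (j + 1) := hge _ (by simp at hj; omega)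
    simp [this]

theorem cesaro_polya_general (a b : ℕ → ℝ)
    (hatend : Filter.Tendsto a Filter.atTop Filter.atTop)
    (hbpos : ∀ j, 0 < b j) (hbmono : Monotone b)
    (hR : ∀ Λ : ℝ, 0 < Λ → RieszMean a Λ ≤ RieszMean b Λ) :
    ∀ k : ℕ, 1 ≤ k → CesaroAvg b k ≤ CesaroAvg a k := by
  intro k _
  have hRb : RieszMean b (b (k + 1)) = k * b (k + 1) - ∑ j ∈ Icc 1 k, b j :=
    rieszMean_eq_mul_sub_sum (fun j hj ↦ hbmono (by simp at hj; omega)) fun j hj ↦ hbmono hj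
  have hsum : ∑ j ∈ Icc 1 k, b j ≤ ∑ j ∈ Icc 1 k, a j := by
    linarith [mul_sub_sum_le_rieszMean hatend k (b (k + 1)), hR _ (hbpos (k + 1))]
  unfold CesaroAvg
  gcongr

/-- Abstract Cesàro–Pólya inequality: an ordering of Riesz means for all
energies implies the reverse ordering of Cesàro averages. -/
theorem cesaro_polya (a b : ℕ → ℝ)
    (hapos : ∀ j, 0 < a j) (hamono : Monotone a)
    (hatend : Filter.Tendsto a Filter.atTop Filter.atTop)
    (hbpos : ∀ j, 0 < b j) (hbmono : Monotone b)
    (hbtend : Filter.Tendsto b Filter.atTop Filter.atTop)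
    (hR : ∀ Λ : ℝ, 0 < Λ → RieszMean a Λ ≤ RieszMean b Λ) :
    ∀ k : ℕ, 1 ≤ k → CesaroAvg b k ≤ CesaroAvg a k :=
  cesaro_polya_general a b hatend hbpos hbmono hR
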